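/- arXiv:2405.06837 — 7 statements merged into one kernel-verified Lean document; each statement's English description precedes it below -/
import Mathlib

section
/- Let F be a field with more than 4 elements and let θ₁, θ₂, θ₃ be the inner automorphisms of R = M_4(F) given by conjugation by I+e₁₃, I+e₁₄, and I+e₂₃ respectively (where e_{ij} are matrix units). Then the common fixed subring {A ∈ R : θ_k(A) = A for k=1,2,3} equals the set of matrices of the form a·I + b·e₁₃ + c·e₁₄ + d·e₂₃ + e·e₂₄ with a,b,c,d,e ∈ F, which is ring-isomorphic to F[x₁,x₂,x₃,x₄]/(x₁,x₂,x₃,x₄)². -/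
open Matrix MvPolynomial

/-- The matrix `I + e₁₃` in `M₄(F)`. -/
noncomputable def U13 (F : Type*) [Field F] : Matrix (Fin 4) (Fin 4) F :=
  1 + Matrix.single 0 2 1
/-- The matrix `I + e₁₄` in `M₄(F)`. -/
noncomputable def U14 (F : Type*) [Field F] : Matrix (Fin 4) (Fin 4) F :=
  1 + Matrix.single 0 3 1
/-- The matrix `I + e₂₃` in `M₄(F)`. -/
noncomputable def U23 (F : Type*) [Field F] : Matrix (Fin 4) (Fin 4) F :=
  1 + Matrix.single 1 2 1

/-!
Conjugation by `1 + E` with `E² = 0` fixes `A` exactly when `A` commutes with `E`, so the fixed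
ring is the centralizer of `e₁₃, e₁₄, e₂₃`. Comparing entries of `A eᵢⱼ = eᵢⱼ A` forces
`A = a I + b e₁₃ + c e₁₄ + d e₂₃ + e e₂₄`. The four matrix units have pairwise zero products, so
`xᵢ ↦ eᵢ` defines a surjection from `F[x₁, …, x₄]` onto the fixed ring; it kills `(x)²`, and
nothing more because `I` and the `eᵢ` are linearly independent.
-/

namespace MvPolynomial

variable {σ R : Type*} [CommRing R]

theorem mem_sq_idealOfVars_iff (p : MvPolynomial σ R) :
    p ∈ idealOfVars σ R ^ 2 ↔
      constantCoeff p = 0 ∧ ∀ i, coeff (Finsupp.single i 1) p = 0 := by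
  rw [mem_pow_idealOfVars_iff']
  refine ⟨fun h => ⟨h 0 (by simp), fun i => h _ (by simp)⟩, ?_⟩
  rintro ⟨h0, h1⟩ x hx
  obtain hx | hx : x.degree = 0 ∨ x.degree = 1 := by omega
  · rw [Finsupp.degree_eq_zero_iff] at hx
    subst hx
    exact h0
  · obtain ⟨i, rfl⟩ : x ∈ Set.range (Finsupp.single · 1) := Finsupp.range_single_one ▸ hx
    exact h1 i

variable {S : Type*} [CommRing S] (f : R →+* S) (n : σ → S)

theorem sq_idealOfVars_le_ker_eval₂Hom (hn : ∀ i j, n i * n j = 0) :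
    idealOfVars σ R ^ 2 ≤ RingHom.ker (eval₂Hom f n) := by
  rw [pow_two, idealOfVars, Ideal.span_mul_span', Ideal.span_le]
  rintro _ ⟨_, ⟨i, rfl⟩, _, ⟨j, rfl⟩, rfl⟩
  simp [hn]

variable [Fintype σ]

theorem eval₂Hom_eq_of_mul_eq_zero (hn : ∀ i j, n i * n j = 0) (p : MvPolynomial σ R) :
    eval₂Hom f n p = f (constantCoeff p) + ∑ i, f (coeff (Finsupp.single i 1) p) * n i := by
  classical
  have hsub : p - (C (constantCoeff p) + ∑ i, C (coeff (Finsupp.single i 1) p) * X i) ∈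
      idealOfVars σ R ^ 2 := by
    rw [mem_sq_idealOfVars_iff]
    constructor
    · simp
    · intro j
      simp [coeff_sum, coeff_X, Finsupp.single_left_inj, eq_comm (a := (0 : σ →₀ ℕ))]
  have heval := sq_idealOfVars_le_ker_eval₂Hom f n hn hsub
  rw [RingHom.mem_ker, map_sub, sub_eq_zero] at heval
  simp [heval]

theorem ker_eval₂Hom_eq_sq_idealOfVars (hn : ∀ i j, n i * n j = 0)
    (hindep : ∀ a (b : σ → R), f a + ∑ i, f (b i) * n i = 0 → a = 0 ∧ ∀ i, b i = 0) :
    RingHom.ker (eval₂Hom f n) = idealOfVars σ R ^ 2 := by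
  refine le_antisymm (fun p hp => ?_) (sq_idealOfVars_le_ker_eval₂Hom f n hn)
  rw [RingHom.mem_ker, eval₂Hom_eq_of_mul_eq_zero f n hn] at hp
  exact (mem_sq_idealOfVars_iff p).2 (hindep _ _ hp)

noncomputable def quotientSqIdealOfVarsEquiv (hn : ∀ i j, n i * n j = 0)
    (hindep : ∀ a (b : σ → R), f a + ∑ i, f (b i) * n i = 0 → a = 0 ∧ ∀ i, b i = 0)
    (hspan : ∀ s, ∃ (a : R) (b : σ → R), f a + ∑ i, f (b i) * n i = s) :
    MvPolynomial σ R ⧸ idealOfVars σ R ^ 2 ≃+* S :=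
  (Ideal.quotEquivOfEq (ker_eval₂Hom_eq_sq_idealOfVars f n hn hindep).symm).trans
    (RingHom.quotientKerEquivOfSurjective fun s => by
      obtain ⟨a, b, rfl⟩ := hspan s
      exact ⟨C a + ∑ i, C (b i) * X i, by simp⟩)

end MvPolynomial

theorem commute_one_add_right_iff {R : Type*} [Ring R] {a b : R} :
    Commute a (1 + b) ↔ Commute a b := by
  simp only [commute_iff_eq, mul_add, add_mul, mul_one, one_mul, add_right_inj]

theorem Matrix.inv_mul_mul_eq_self_iff {n R : Type*} [Fintype n] [DecidableEq n] [CommRing R]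
    (U : Matrix n n R) [Invertible U] (A : Matrix n n R) :
    U⁻¹ * A * U = A ↔ Commute A U := by
  rw [mul_assoc, inv_mul_eq_iff_eq_mul_of_invertible, commute_iff_eq]

theorem Matrix.conj_one_add_eq_self_iff {n R : Type*} [Fintype n] [DecidableEq n] [CommRing R]
    {E : Matrix n n R} (hE : E * E = 0) (A : Matrix n n R) :
    (1 + E)⁻¹ * A * (1 + E) = A ↔ Commute A E := by
  have := invertibleOfRightInverse (1 + E) (1 - E) <| by
    rw [add_mul, one_mul, mul_sub, mul_one, hE, sub_zero, sub_add_cancel]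
  rw [inv_mul_mul_eq_self_iff, commute_one_add_right_iff]

theorem Matrix.apply_eq_of_commute_single {n R : Type*} [Fintype n] [DecidableEq n] [Semiring R]
    {A : Matrix n n R} {i j : n} (h : Commute A (single i j 1)) :
    (∀ k, k ≠ i → A k i = 0) ∧ (∀ l, l ≠ j → A j l = 0) ∧ A i i = A j j := by
  have h' := fun k l => congr_fun (congr_fun h.eq k) l
  refine ⟨fun k hk => ?_, fun l hl => ?_, ?_⟩
  · simpa [hk] using h' k j
  · simpa [hl] using (h' i l).symm
  · simpa using h' i j

section NilForm

variable {R : Type*} [CommRing R]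

variable (R) in
/-- The matrix units `e₁₃, e₁₄, e₂₃, e₂₄`, with indices shifted down by one to `Fin 4`. -/
def nilGen : Fin 4 → Matrix (Fin 4) (Fin 4) R :=
  ![single 0 2 1, single 0 3 1, single 1 2 1, single 1 3 1]

theorem nilGen_mul_nilGen (i j : Fin 4) : nilGen R i * nilGen R j = 0 := by
  fin_cases i <;> fin_cases j <;>
    · refine single_mul_single_of_ne _ _ _ _ ?_ _
      decide

def nilForm (a : R) (b : Fin 4 → R) : Matrix (Fin 4) (Fin 4) R :=
  a • 1 + ∑ i, b i • nilGen R i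

theorem nilForm_commute (a a' : R) (b b' : Fin 4 → R) :
    Commute (nilForm a b) (nilForm a' b') := by
  have hprod : ∀ c c' : Fin 4 → R, (∑ i, c i • nilGen R i) * ∑ j, c' j • nilGen R j = 0 :=
    fun c c' => by simp [Finset.sum_mul, Finset.mul_sum, nilGen_mul_nilGen]
  have hsum : Commute (∑ i, b i • nilGen R i) (∑ j, b' j • nilGen R j) :=
    (hprod b b').trans (hprod b' b).symm
  exact ((Commute.one_left _).smul_left a).add_left
    (((Commute.one_right _).smul_right a').add_right hsum)

theorem nilGen_eq_nilForm (k : Fin 4) : nilGen R k = nilForm 0 (Pi.single k 1) := by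
  simp [nilForm, Pi.single_apply]

theorem nilForm_eq_zero {a : R} {b : Fin 4 → R} (h : nilForm a b = 0) :
    a = 0 ∧ ∀ i, b i = 0 := by
  have h' := fun k l => congr_fun (congr_fun h k) l
  simp only [nilForm, nilGen, Fin.sum_univ_four] at h'
  refine ⟨by simpa using h' 0 0, fun i => ?_⟩
  fin_cases i
  · simpa using h' 0 2
  · simpa using h' 0 3
  · simpa using h' 1 2
  · simpa using h' 1 3

theorem eq_nilForm_of_commute {A : Matrix (Fin 4) (Fin 4) R} (h02 : Commute A (single 0 2 1))
    (h03 : Commute A (single 0 3 1)) (h12 : Commute A (single 1 2 1)) :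
    A = nilForm (A 0 0) ![A 0 2, A 0 3, A 1 2, A 1 3] := by
  obtain ⟨col0, row2, d02⟩ := apply_eq_of_commute_single h02
  obtain ⟨-, row3, d03⟩ := apply_eq_of_commute_single h03
  obtain ⟨col1, -, d12⟩ := apply_eq_of_commute_single h12
  have d11 : A 1 1 = A 0 0 := d12.trans d02.symm
  ext i j
  fin_cases i <;> fin_cases j <;>
    simp [nilForm, nilGen, Fin.sum_univ_four, one_apply, col0, col1, row2, row3, d02.symm,
      d03.symm, d11]

theorem commute_single_iff_exists_nilForm (A : Matrix (Fin 4) (Fin 4) R) :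
    (Commute A (single 0 2 1) ∧ Commute A (single 0 3 1) ∧ Commute A (single 1 2 1)) ↔
      ∃ (a : R) (b : Fin 4 → R), A = nilForm a b := by
  refine ⟨fun ⟨h02, h03, h12⟩ => ⟨_, _, eq_nilForm_of_commute h02 h03 h12⟩, ?_⟩
  rintro ⟨a, b, rfl⟩
  have hk : ∀ k, Commute (nilForm a b) (nilGen R k) :=
    fun k => by rw [nilGen_eq_nilForm]; exact nilForm_commute _ _ _ _
  exact ⟨hk 0, hk 1, hk 2⟩

theorem exists_nilForm_iff (A : Matrix (Fin 4) (Fin 4) R) :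
    (∃ (a : R) (b : Fin 4 → R), A = nilForm a b) ↔ ∃ a b c d e : R,
      A = a • 1 + b • single 0 2 1 + c • single 0 3 1 + d • single 1 2 1 + e • single 1 3 1 := by
  simp only [nilForm, nilGen, Fin.sum_univ_four, Fin.exists_fin_succ_pi, Fin.exists_fin_zero_pi]
  simp [add_assoc]

end NilForm

section FixedSubring

variable {F : Type*} [Field F]

theorem conj_eq_self_iff_commute_single (A : Matrix (Fin 4) (Fin 4) F) :
    ((U13 F)⁻¹ * A * U13 F = A ∧ (U14 F)⁻¹ * A * U14 F = A ∧ (U23 F)⁻¹ * A * U23 F = A) ↔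
      Commute A (single 0 2 1) ∧ Commute A (single 0 3 1) ∧ Commute A (single 1 2 1) := by
  rw [U13, U14, U23, conj_one_add_eq_self_iff (single_mul_single_of_ne _ _ _ _ (by decide) _),
    conj_one_add_eq_self_iff (single_mul_single_of_ne _ _ _ _ (by decide) _),
    conj_one_add_eq_self_iff (single_mul_single_of_ne _ _ _ _ (by decide) _)]

variable (F) in
abbrev fixedSubring : Subring (Matrix (Fin 4) (Fin 4) F) :=
  Subring.centralizer {U13 F, U14 F, U23 F}

theorem mem_fixedSubring_iff_commute_single (A : Matrix (Fin 4) (Fin 4) F) :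
    A ∈ fixedSubring F ↔
      Commute A (single 0 2 1) ∧ Commute A (single 0 3 1) ∧ Commute A (single 1 2 1) := by
  simp only [Subring.mem_centralizer_iff, Set.mem_insert_iff, Set.mem_singleton_iff,
    forall_eq_or_imp, forall_eq, ← commute_iff_eq, U13, U14, U23, Commute.symm_iff (b := A),
    commute_one_add_right_iff]

theorem mem_fixedSubring_iff_exists_nilForm (A : Matrix (Fin 4) (Fin 4) F) :
    A ∈ fixedSubring F ↔ ∃ a b, A = nilForm a b :=
  (mem_fixedSubring_iff_commute_single A).trans (commute_single_iff_exists_nilForm A)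

variable (F) in
/-- Not an instance: instance search would otherwise route the ring structure of the centralizer
through it, which changes how statements about `fixedSubring F` elaborate. -/
abbrev fixedSubringCommRing : CommRing (fixedSubring F) where
  mul_comm x y := Subtype.ext <| by
    obtain ⟨a, b, hx⟩ := (mem_fixedSubring_iff_exists_nilForm _).1 x.2
    obtain ⟨a', b', hy⟩ := (mem_fixedSubring_iff_exists_nilForm _).1 y.2
    simp only [Subring.coe_mul, hx, hy]
    exact (nilForm_commute a a' b b').eq

variable (F) in
def fixedSubringScalar : F →+* fixedSubring F :=
  (algebraMap F _).codRestrict _ fun a => (mem_fixedSubring_iff_exists_nilForm _).2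
    ⟨a, 0, by simp [nilForm, Algebra.algebraMap_eq_smul_one]⟩

def fixedSubringNilGen (i : Fin 4) : fixedSubring F :=
  ⟨nilGen F i, (mem_fixedSubring_iff_exists_nilForm _).2 ⟨0, _, nilGen_eq_nilForm i⟩⟩

theorem coe_fixedSubringScalar_add_sum (a : F) (b : Fin 4 → F) :
    ((fixedSubringScalar F a + ∑ i, fixedSubringScalar F (b i) * fixedSubringNilGen i :
      fixedSubring F) : Matrix (Fin 4) (Fin 4) F) = nilForm a b := by
  simp [fixedSubringScalar, fixedSubringNilGen, nilForm, Algebra.algebraMap_eq_smul_one]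

variable (F) in
noncomputable def fixedSubringEquiv :
    fixedSubring F ≃+* MvPolynomial (Fin 4) F ⧸ idealOfVars (Fin 4) F ^ 2 :=
  letI := fixedSubringCommRing F
  (quotientSqIdealOfVarsEquiv (fixedSubringScalar F) fixedSubringNilGen
    (fun i j => Subtype.ext (nilGen_mul_nilGen i j))
    (fun a b h => nilForm_eq_zero <|
      (coe_fixedSubringScalar_add_sum a b).symm.trans (congrArg Subtype.val h))
    (fun s => by
      obtain ⟨a, b, hs⟩ := (mem_fixedSubring_iff_exists_nilForm _).1 s.2
      exact ⟨a, b, Subtype.ext ((coe_fixedSubringScalar_add_sum a b).trans hs.symm)⟩)).symm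

end FixedSubring

theorem stmt_3_general (F : Type*) [Field F] :
    ({A : Matrix (Fin 4) (Fin 4) F |
        (U13 F)⁻¹ * A * U13 F = A ∧ (U14 F)⁻¹ * A * U14 F = A ∧ (U23 F)⁻¹ * A * U23 F = A}
      = {A : Matrix (Fin 4) (Fin 4) F | ∃ a b c d e : F,
          A = a • (1 : Matrix (Fin 4) (Fin 4) F) + b • Matrix.single 0 2 1 +
            c • Matrix.single 0 3 1 + d • Matrix.single 1 2 1 + e • Matrix.single 1 3 1}) ∧
    ({A : Matrix (Fin 4) (Fin 4) F |
        (U13 F)⁻¹ * A * U13 F = A ∧ (U14 F)⁻¹ * A * U14 F = A ∧ (U23 F)⁻¹ * A * U23 F = A}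
      = (Subring.centralizer ({U13 F, U14 F, U23 F} : Set (Matrix (Fin 4) (Fin 4) F)) :
          Set (Matrix (Fin 4) (Fin 4) F))) ∧
    Nonempty
      ((Subring.centralizer ({U13 F, U14 F, U23 F} : Set (Matrix (Fin 4) (Fin 4) F))) ≃+*
        (MvPolynomial (Fin 4) F ⧸
          (Ideal.span (Set.range (X : Fin 4 → MvPolynomial (Fin 4) F))) ^ 2)) := by
  refine ⟨?_, ?_, ⟨fixedSubringEquiv F⟩⟩
  · ext A
    exact ((conj_eq_self_iff_commute_single A).trans
      (commute_single_iff_exists_nilForm A)).trans (exists_nilForm_iff A)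
  · ext A
    exact (conj_eq_self_iff_commute_single A).trans (mem_fixedSubring_iff_commute_single A).symm

/-- For a field `F` with more than 4 elements, the common fixed subring of the
inner automorphisms of `M₄(F)` given by conjugation by `I+e₁₃`, `I+e₁₄`, `I+e₂₃` equals the
set of matrices `a·I + b·e₁₃ + c·e₁₄ + d·e₂₃ + e·e₂₄`, and is ring-isomorphic to
`F[x₁,x₂,x₃,x₄]/(x₁,x₂,x₃,x₄)²`. -/
theorem stmt_3 (F : Type*) [Field F] (hF : 4 < Cardinal.mk F) :
    ({A : Matrix (Fin 4) (Fin 4) F |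
        (U13 F)⁻¹ * A * U13 F = A ∧ (U14 F)⁻¹ * A * U14 F = A ∧ (U23 F)⁻¹ * A * U23 F = A}
      = {A : Matrix (Fin 4) (Fin 4) F | ∃ a b c d e : F,
          A = a • (1 : Matrix (Fin 4) (Fin 4) F) + b • Matrix.single 0 2 1 +
            c • Matrix.single 0 3 1 + d • Matrix.single 1 2 1 + e • Matrix.single 1 3 1}) ∧
    ({A : Matrix (Fin 4) (Fin 4) F |
        (U13 F)⁻¹ * A * U13 F = A ∧ (U14 F)⁻¹ * A * U14 F = A ∧ (U23 F)⁻¹ * A * U23 F = A}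
      = (Subring.centralizer ({U13 F, U14 F, U23 F} : Set (Matrix (Fin 4) (Fin 4) F)) :
          Set (Matrix (Fin 4) (Fin 4) F))) ∧
    Nonempty
      ((Subring.centralizer ({U13 F, U14 F, U23 F} : Set (Matrix (Fin 4) (Fin 4) F))) ≃+*
        (MvPolynomial (Fin 4) F ⧸
          (Ideal.span (Set.range (X : Fin 4 → MvPolynomial (Fin 4) F))) ^ 2)) :=
  stmt_3_general F
end

section
/- Let R be a ring and I an ideal such that for every idempotent e ∈ R, every unit of the corner ring (e+I)(R/I)(e+I) lifts to a unit of eRe. Suppose a ∈ R is unit-regular (i.e., a = a w a for some unit w of R). Then every unit inner inverse of the image of a in R/I lifts to a unit inner inverse of a: if v̄ ∈ R/I is a unit with ā v̄ ā = ā, then there exists a unit u of R with a u a = a and u + I = v̄. -/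
/-!
Replacing `a` by the idempotent `e = a u` (where `a u a = a`) and `v̄` by `ū⁻¹ v̄` reduces the
problem to an idempotent `e`. In Peirce block form with respect to `ē`, a unit `G` with
`ē G ē = ē` factors as `(1 + (1-ē) G ē) (ē + ē G (1-ē) + (G - G ē G))`, where the Schur complement
`G - G ē G` is a unit of the corner `(1-ē) S (1-ē)`. Lift it to a unit `d` of `(1-e) R (1-e)`
and lift `G` to any `x`; then `(1 + (1-e) x e) (e + e x (1-e) + d)` is a unit of `R`, because
its off-diagonal parts are square-zero, and it is an inner inverse of `e` lying over `G`.
-/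

section CornerUnits

variable {R S : Type*} [Ring R] [Ring S]

def IsCornerUnit (e v : R) : Prop :=
  e * v * e = v ∧ ∃ v', e * v' * e = v' ∧ v * v' = e ∧ v' * v = e

def CornerUnitsLift (π : R →+* S) : Prop :=
  ∀ e : R, IsIdempotentElem e → ∀ w : S, IsCornerUnit (π e) w → ∃ v, IsCornerUnit e v ∧ π v = w

lemma mul_corner_eq_zero {f g v : R} (hv : f * v * f = v) (h : g * f = 0) : g * v = 0 := by
  rw [← hv, ← mul_assoc, ← mul_assoc, h, zero_mul, zero_mul]

lemma corner_mul_eq_zero {f g v : R} (hv : f * v * f = v) (h : f * g = 0) : v * g = 0 := by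
  rw [← hv, mul_assoc, h, mul_zero]

lemma isUnit_one_add_mul_mul {f g : R} (x : R) (h : g * f = 0) : IsUnit (1 + f * x * g) := by
  refine IsNilpotent.isUnit_one_add ⟨2, ?_⟩
  calc (f * x * g) ^ 2 = f * x * (g * f) * x * g := by noncomm_ring
    _ = 0 := by rw [h, mul_zero, zero_mul, zero_mul]

lemma IsCornerUnit.isUnit_add {e d : R} (he : IsIdempotentElem e) (hd : IsCornerUnit (1 - e) d) :
    IsUnit (e + d) := by
  obtain ⟨hdc, d', hd'c, hdd', hd'd⟩ := hd
  have hed : e * d = 0 := mul_corner_eq_zero hdc he.mul_one_sub_self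
  have hde : d * e = 0 := corner_mul_eq_zero hdc he.one_sub_mul_self
  have hed' : e * d' = 0 := mul_corner_eq_zero hd'c he.mul_one_sub_self
  have hd'e : d' * e = 0 := corner_mul_eq_zero hd'c he.one_sub_mul_self
  refine ⟨⟨e + d, e + d', ?_, ?_⟩, rfl⟩ <;>
    simp only [add_mul, mul_add, he.eq, hed, hde, hed', hd'e, hdd', hd'd] <;> abel

lemma IsCornerUnit.isUnit_add_mul_mul_one_sub_add {e d : R} (he : IsIdempotentElem e)
    (hd : IsCornerUnit (1 - e) d) (x : R) : IsUnit (e + e * x * (1 - e) + d) := by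
  obtain ⟨-, d', hd'c, -, hd'd⟩ := id hd
  have hd'e : d' * e = 0 := corner_mul_eq_zero hd'c he.one_sub_mul_self
  have hfactor : e + e * x * (1 - e) + d = (1 + e * x * d') * (e + d) := by
    rw [one_add_mul, mul_add, mul_assoc (e * x), hd'e, mul_zero, mul_assoc (e * x), hd'd]
    abel
  rw [hfactor]
  exact (isUnit_one_add_mul_mul x hd'e).mul (hd.isUnit_add he)

lemma isCornerUnit_one_sub_sub_mul_mul {E : S} (he : IsIdempotentElem E) (G : Sˣ) (hG : E * G * E = E) :
    IsCornerUnit (1 - E) (G - G * E * G) := by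
  have hleft : (1 - E) * (G - G * E * G) = G - G * E * G := by
    simp only [mul_sub, sub_mul, one_mul, ← mul_assoc, hG]; abel
  have hright : (G - G * E * G) * (1 - E) = G - G * E * G := by
    simp only [mul_sub, sub_mul, mul_one, mul_assoc, hG]; abel
  have hf := he.one_sub
  refine ⟨by rw [hleft, hright], (1 - E) * ↑G⁻¹ * (1 - E), ?_, ?_, ?_⟩
  · rw [← mul_assoc, ← mul_assoc, hf.eq, mul_assoc, hf.eq]
  · calc (G - G * E * G) * ((1 - E) * ↑G⁻¹ * (1 - E))
        = (G - G * E * G) * ↑G⁻¹ * (1 - E) := by rw [← mul_assoc, ← mul_assoc, hright]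
      _ = (1 - G * E) * (1 - E) := by simp only [sub_mul, mul_assoc, Units.mul_inv, mul_one]
      _ = 1 - E := by simp only [sub_mul, mul_sub, one_mul, mul_one, mul_assoc, he.eq]; abel
  · calc (1 - E) * ↑G⁻¹ * (1 - E) * (G - G * E * G)
        = (1 - E) * (↑G⁻¹ * (G - G * E * G)) := by rw [mul_assoc, hleft, mul_assoc]
      _ = (1 - E) * (1 - E * G) := by simp only [mul_sub, ← mul_assoc, Units.inv_mul, one_mul]
      _ = 1 - E := by simp only [sub_mul, mul_sub, one_mul, mul_one, ← mul_assoc, he.eq]; abel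

lemma peirce_factorization {E G : S} (he : IsIdempotentElem E) (hG : E * G * E = E) :
    (1 + (1 - E) * G * E) * (E + E * G * (1 - E) + (G - G * E * G)) = G := by
  have hE : ∀ y : S, E * (E * y) = E * y := fun y => by rw [← mul_assoc, he.eq]
  have hEGE : ∀ y : S, E * (G * (E * y)) = E * y := fun y => by
    rw [← mul_assoc, ← mul_assoc, hG]
  have hEGE' : E * (G * E) = E := by rw [← mul_assoc, hG]
  simp only [mul_sub, sub_mul, mul_add, add_mul, one_mul, mul_one, mul_assoc, he.eq, hE, hEGE,
    hEGE']
  noncomm_ring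

lemma CornerUnitsLift.exists_unit_inner_inverse_lift {π : R →+* S} (hlift : CornerUnitsLift π)
    (hsurj : Function.Surjective π) {e : R} (he : IsIdempotentElem e) (G : Sˣ)
    (hG : π e * G * π e = π e) : ∃ w : Rˣ, e * w * e = e ∧ π w = G := by
  obtain ⟨x, hx⟩ := hsurj G
  obtain ⟨d, hd, hπd⟩ := hlift (1 - e) he.one_sub _
    (by simpa only [map_sub, map_one] using isCornerUnit_one_sub_sub_mul_mul (he.map π) G hG)
  refine ⟨((isUnit_one_add_mul_mul x he.mul_one_sub_self).mul
    (hd.isUnit_add_mul_mul_one_sub_add he x)).unit, ?_, ?_⟩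
  · have hleft : e * (1 + (1 - e) * x * e) = e := by
      rw [mul_add, mul_one, ← mul_assoc, ← mul_assoc, he.mul_one_sub_self, zero_mul, zero_mul,
        add_zero]
    have hright : (e + e * x * (1 - e) + d) * e = e := by
      rw [add_mul, add_mul, he.eq, mul_assoc _ (1 - e), he.one_sub_mul_self, mul_zero,
        corner_mul_eq_zero hd.1 he.one_sub_mul_self, add_zero, add_zero]
    rw [IsUnit.unit_spec, ← mul_assoc, hleft, mul_assoc, hright, he.eq]
  · simp only [IsUnit.unit_spec, map_mul, map_add, map_sub, map_one, hx, hπd]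
    exact peirce_factorization (he.map π) hG

lemma mul_unit_mul_mul_eq_self {M : Type*} [Monoid M] {a : M} {u : Mˣ}
    (hu : a * u * a = a) {w : M} (hw : a * u * w * (a * u) = a * u) : a * (u * w) * a = a :=
  calc a * (u * w) * a = a * u * w * (a * u * a) := by rw [hu]; simp only [mul_assoc]
    _ = a * u * w * (a * u) * a := by simp only [mul_assoc]
    _ = a := by rw [hw, hu]

end CornerUnits

theorem stmt_4_general {R S : Type*} [Ring R] [Ring S] (π : R →+* S)
    (hsurj : Function.Surjective π)
    (hcorner : ∀ e : R, IsIdempotentElem e → ∀ w : S, π e * w * π e = w →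
      (∃ w' : S, π e * w' * π e = w' ∧ w * w' = π e ∧ w' * w = π e) →
      ∃ v : R, e * v * e = v ∧ (∃ v' : R, e * v' * e = v' ∧ v * v' = e ∧ v' * v = e) ∧
        π v = w)
    (a : R) (ha : ∃ u : Rˣ, a * u * a = a)
    (v : Sˣ) (hv : π a * v * π a = π a) :
    ∃ u : Rˣ, a * u * a = a ∧ π u = v := by
  have hlift : CornerUnitsLift π := fun e he w ⟨hw, hw'⟩ => by
    obtain ⟨v, hv, hv', hπv⟩ := hcorner e he w hw hw'
    exact ⟨v, ⟨hv, hv'⟩, hπv⟩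
  obtain ⟨u, hu⟩ := ha
  have he : IsIdempotentElem (a * u) := by rw [IsIdempotentElem, ← mul_assoc, hu]
  set U := Units.map (π : R →* S) u
  have hG : π (a * u) * ↑(U⁻¹ * v) * π (a * u) = π (a * u) := by
    rw [show π (a * u) = π a * U from map_mul π a u, Units.val_mul, mul_assoc (π a),
      Units.mul_inv_cancel_left]
    simp only [← mul_assoc, hv]
  obtain ⟨w, hw, hπw⟩ := hlift.exists_unit_inner_inverse_lift hsurj he (U⁻¹ * v) hG
  refine ⟨u * w, mul_unit_mul_mul_eq_self hu hw, ?_⟩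
  rw [Units.val_mul, map_mul, hπw, Units.val_mul]
  exact U.mul_inv_cancel_left v

/-- If units lift through corners modulo an ideal (encoded via a surjective
ring homomorphism `π : R → S` playing the role of the quotient map `R → R/I`), inner
inverses of regular elements lift, and `a` is unit-regular, then every unit inner inverse
of `π a` lifts to a unit inner inverse of `a`. -/
theorem stmt_4 {R S : Type*} [Ring R] [Ring S] (π : R →+* S)
    (hsurj : Function.Surjective π)
    (hcorner : ∀ e : R, IsIdempotentElem e → ∀ w : S, π e * w * π e = w →
      (∃ w' : S, π e * w' * π e = w' ∧ w * w' = π e ∧ w' * w = π e) →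
      ∃ v : R, e * v * e = v ∧ (∃ v' : R, e * v' * e = v' ∧ v * v' = e ∧ v' * v = e) ∧
        π v = w)
    (hinner : ∀ (b : R) (c : S), (∃ d : R, b * d * b = b) → π b * c * π b = π b →
      ∃ d : R, b * d * b = b ∧ π d = c)
    (a : R) (ha : ∃ u : Rˣ, a * u * a = a)
    (v : Sˣ) (hv : π a * v * π a = π a) :
    ∃ u : Rˣ, a * u * a = a ∧ π u = v :=
  stmt_4_general π hsurj hcorner a ha v hv
end

section
/- Let (R_i, f_i) for i ∈ ℕ be an inverse system of rings where each connecting homomorphism f_i : R_{i+1} → R_i is surjective and each R_i is von Neumann regular. Then the inverse limit ring lim← R_i = {(x_i) ∈ ∏ R_i : f_i(x_{i+1}) = x_i for all i} is von Neumann regular. -/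
/-!
Fix a compatible sequence `(aᵢ)` and let `Qᵢ = {b | aᵢ b aᵢ = aᵢ}` be the set of quasi-inverses
of `aᵢ`. Since `fᵢ (aᵢ₊₁) = aᵢ`, the map `fᵢ` sends `Qᵢ₊₁` into `Qᵢ`, and it does so surjectively:
if `d ∈ Qᵢ₊₁` and `c` lifts `b ∈ Qᵢ`, then `c - d aᵢ₊₁ c aᵢ₊₁ d + d aᵢ₊₁ d` lies in `Qᵢ₊₁` and maps
to `b`. An inverse system of nonempty sets along `ℕ` with surjective maps has a compatible
sequence, and a compatible sequence of quasi-inverses is a quasi-inverse of `(aᵢ)` in the limit.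
-/

/-- The inverse limit of an inverse system of rings `(Rᵢ, fᵢ)` indexed by `ℕ`, realized as
the subring of compatible sequences in the product. -/
def ringInverseLimit (R : ℕ → Type*) [∀ i, Ring (R i)]
    (f : ∀ i, R (i + 1) →+* R i) : Subring (∀ i, R i) where
  carrier := {x | ∀ i, f i (x (i + 1)) = x i}
  zero_mem' := by intro i; simp
  one_mem' := by intro i; simp
  add_mem' := by intro x y hx hy i; simp [map_add, hx i, hy i]
  mul_mem' := by intro x y hx hy i; simp [map_mul, hx i, hy i]
  neg_mem' := by intro x hx i; simp [map_neg, hx i]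

theorem exists_compatible_seq_of_surjective {X : ℕ → Type*} (g : ∀ i, X (i + 1) → X i)
    (hg : ∀ i, Function.Surjective (g i)) (x₀ : X 0) :
    ∃ x : ∀ i, X i, ∀ i, g i (x (i + 1)) = x i :=
  ⟨fun i => Nat.rec x₀ (fun n xn => Function.surjInv (hg n) xn) i,
    fun i => Function.surjInv_eq (hg i) _⟩

theorem RingHom.exists_lift_mul_mul_eq_self {S T : Type*} [Ring S] [Ring T] (f : S →+* T)
    (hf : Function.Surjective f) {a d : S} (hd : a * d * a = a) {b : T}
    (hb : f a * b * f a = f a) :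
    ∃ b' : S, a * b' * a = a ∧ f b' = b := by
  obtain ⟨c, rfl⟩ := hf b
  refine ⟨c - d * a * c * a * d + d * a * d, ?_, ?_⟩
  · calc a * (c - d * a * c * a * d + d * a * d) * a
        = a * c * a - (a * d * a) * c * (a * d * a) + (a * d * a) * d * a := by noncomm_ring
      _ = a := by rw [hd, hd, sub_self, zero_add]
  · calc f (c - d * a * c * a * d + d * a * d)
        = f c - f d * (f a * f c * f a) * f d + f d * f a * f d := by
          simp only [map_add, map_sub, map_mul, mul_assoc]
      _ = f c := by rw [hb, sub_add_cancel]

/-- An inverse limit of von Neumann regular rings along surjective connecting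
homomorphisms is von Neumann regular. -/
theorem stmt_5 (R : ℕ → Type*) [∀ i, Ring (R i)] (f : ∀ i, R (i + 1) →+* R i)
    (hsurj : ∀ i, Function.Surjective (f i))
    (hreg : ∀ i, ∀ a : R i, ∃ b : R i, a * b * a = a) :
    ∀ a : ringInverseLimit R f, ∃ b : ringInverseLimit R f, a * b * a = a := by
  rintro ⟨a, ha⟩
  let Q : ∀ i, Set (R i) := fun i => {b | a i * b * a i = a i}
  have hmaps (i : ℕ) (b : Q (i + 1)) : f i b ∈ Q i := by
    show a i * f i b * a i = a i
    simpa only [map_mul, ha i] using congrArg (f i) b.2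
  have hlift (i : ℕ) : Function.Surjective fun b : Q (i + 1) => (⟨f i b, hmaps i b⟩ : Q i) := by
    rintro ⟨b, hb⟩
    obtain ⟨d, hd⟩ := hreg (i + 1) (a (i + 1))
    obtain ⟨b', hb', rfl⟩ :=
      (f i).exists_lift_mul_mul_eq_self (hsurj i) hd (b := b) (by rwa [ha i])
    exact ⟨⟨b', hb'⟩, rfl⟩
  obtain ⟨b₀, hb₀⟩ := hreg 0 (a 0)
  obtain ⟨b, hb⟩ := exists_compatible_seq_of_surjective _ hlift ⟨b₀, hb₀⟩
  refine ⟨⟨fun i => b i, fun i => congrArg Subtype.val (hb i)⟩, ?_⟩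
  ext i
  exact (b i).2
end

section
/- Let (R_i, f_i) for i ∈ ℕ be an inverse system of rings where each f_i : R_{i+1} → R_i is surjective and each R_i is unit-regular. Then the inverse limit ring {(x_i) ∈ ∏ R_i : f_i(x_{i+1}) = x_i} is unit-regular. -/
def IsUnitRegularRing (S : Type*) [Ring S] : Prop := ∀ a : S, ∃ u : Sˣ, a * u * a = a

section Ring

variable {S : Type*} [Ring S]

theorem isConj_of_mul_eq_right {a b : S} (hab : a * b = b) (hba : b * a = a) : IsConj a b := by
  have ha : a * a = a := by linear_combination (norm := noncomm_ring) hab * a - a * hba + hba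
  have hb : b * b = b := by linear_combination (norm := noncomm_ring) hba * b - b * hab + hab
  refine ⟨⟨1 + a - b, 1 - a + b, ?_, ?_⟩, ?_⟩
  · linear_combination (norm := noncomm_ring) hab + hba - ha - hb
  · linear_combination (norm := noncomm_ring) hab + hba - ha - hb
  · show (1 + a - b) * a = b * (1 + a - b)
    linear_combination (norm := noncomm_ring) ha + hb - 2 * hba

theorem IsConj.one_sub {a b : S} (h : IsConj a b) : IsConj (1 - a) (1 - b) := by
  obtain ⟨c, hc⟩ := h
  exact ⟨c, (SemiconjBy.one_right _).sub_right hc⟩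

theorem isConj_of_mul_eq_left {a b : S} (hab : a * b = a) (hba : b * a = b) : IsConj a b := by
  simpa using (isConj_of_mul_eq_right (a := 1 - a) (b := 1 - b)
    (by linear_combination (norm := noncomm_ring) hab)
    (by linear_combination (norm := noncomm_ring) hba)).one_sub

theorem exists_units_mul_mul_eq_of_mul_eq {x y s t : S} (hxyx : x * y * x = x)
    (hst : s * t = 1 - x * y) (hts : t * s = 1 - y * x) : ∃ u : Sˣ, x * u * x = x := by
  have htx : t * s * t * x = 0 := by
    linear_combination (norm := noncomm_ring) t * hst * x - t * hxyx
  have hxt : x * (t * s * t) = 0 := by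
    linear_combination (norm := noncomm_ring) x * hts * t - hxyx * t
  have hys : y * x * y * (s * t * s) = 0 := by
    linear_combination (norm := noncomm_ring) y * x * y * hst * s - y * hxyx * y * s
  have hsy : s * t * s * (y * x * y) = 0 := by
    linear_combination (norm := noncomm_ring) s * hts * (y * x * y) - s * y * hxyx * y
  have hts2 : t * s * (t * s) = t * s := by
    linear_combination (norm := noncomm_ring) hts * (t * s) - y * x * hts + y * hxyx
  have hst2 : s * t * (s * t) = s * t := by
    linear_combination (norm := noncomm_ring) hst * (s * t) - x * y * hst + hxyx * y
  have hts' : t * s * t * (s * t * s) = 1 - y * x := by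
    linear_combination (norm := noncomm_ring) hts2 * (t * s) + hts2 + hts
  have hst' : s * t * s * (t * s * t) = 1 - x * y := by
    linear_combination (norm := noncomm_ring) hst2 * (s * t) + hst2 + hst
  refine ⟨⟨y * x * y + t * s * t, x + s * t * s, ?_, ?_⟩, ?_⟩
  · linear_combination (norm := noncomm_ring) hys + htx + hts' + y * hxyx
  · linear_combination (norm := noncomm_ring) hxt + hsy + hst' + hxyx * y
  · show x * (y * x * y + t * s * t) * x = x
    linear_combination (norm := noncomm_ring) hxt * x + hxyx * y * x + hxyx

theorem SemiconjBy.units_mul_inv_mul {c : Sˣ} {p q : S} (hc : SemiconjBy (↑c) p q)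
    (hp : IsIdempotentElem p) :
    p * ↑c⁻¹ * q * (q * c * p) = p ∧ q * c * p * (p * ↑c⁻¹ * q) = q := by
  have ht : q * c * p = c * p := by
    linear_combination (norm := noncomm_ring) c * hp.eq - hc.eq * p
  have hs : p * ↑c⁻¹ * q = p * ↑c⁻¹ := by
    linear_combination (norm := noncomm_ring) p * hc.units_inv_symm_left.eq + hp.eq * ↑c⁻¹
  rw [ht, hs]
  constructor
  · simp only [mul_assoc, Units.inv_mul_cancel_left, hp.eq]
  · linear_combination (norm := noncomm_ring) c * hp.eq * ↑c⁻¹ + hc.eq * ↑c⁻¹ + q * c.mul_inv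

theorem Subsemigroup.mul_mul_mem_corner {e x y : S} (he : IsIdempotentElem e)
    (hx : x ∈ corner e) (hy : y ∈ corner e) (z : S) : x * z * y ∈ corner e :=
  (mem_corner_iff he).2
    ⟨by linear_combination (norm := noncomm_ring) ((mem_corner_iff he).1 hx).1 * z * y,
      by linear_combination (norm := noncomm_ring) x * z * ((mem_corner_iff he).1 hy).2⟩

namespace IsIdempotentElem

theorem one_sub_mul_mul_mul_self_eq_zero {e : S} (he : IsIdempotentElem e) (x : S) :
    (1 - e) * x * e * ((1 - e) * x * e) = 0 := by
  linear_combination (norm := noncomm_ring) -((1 - e) * x * he.eq * x * e)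

theorem mul_mul_one_sub_mul_self_eq_zero {e : S} (he : IsIdempotentElem e) (x : S) :
    e * x * (1 - e) * (e * x * (1 - e)) = 0 := by
  linear_combination (norm := noncomm_ring) -(e * x * he.eq * x * (1 - e))

theorem mul_one_sub_mul_mul_one_sub {e : S} (he : IsIdempotentElem e) {P : S}
    (hP : e * P * e = e) :
    e * ((1 - (1 - e) * P * e) * P * (1 - e * P * (1 - e))) = e ∧
      (1 - (1 - e) * P * e) * P * (1 - e * P * (1 - e)) * e = e := by
  have heα : e * ((1 - e) * P * e) = 0 := by
    linear_combination (norm := noncomm_ring) -(he.eq * P * e)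
  have hαe : (1 - e) * P * e * e = (1 - e) * P * e := by
    linear_combination (norm := noncomm_ring) (1 - e) * P * he.eq
  have heβ : e * (e * P * (1 - e)) = e * P * (1 - e) := by
    linear_combination (norm := noncomm_ring) he.eq * P * (1 - e)
  have hβe : e * P * (1 - e) * e = 0 := by
    linear_combination (norm := noncomm_ring) -(e * P * he.eq)
  have hαα := he.one_sub_mul_mul_mul_self_eq_zero P
  have hββ := he.mul_mul_one_sub_mul_self_eq_zero P
  constructor
  · linear_combination (norm := noncomm_ring) hP * (1 - e * P * (1 - e)) -
      heα * P * (1 - e * P * (1 - e)) - heβ - hββ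
  · linear_combination (norm := noncomm_ring) -((1 - (1 - e) * P * e) * P * hβe) +
      (1 - (1 - e) * P * e) * hP - hαα - hαe

variable {e : S} (he : IsIdempotentElem e)

def toCorner (z : S) : he.Corner := ⟨e * z * e, z, rfl⟩

theorem isUnit_toCorner_of_commute {v : Sˣ} (hv : Commute (v : S) e) :
    IsUnit (he.toCorner v) := by
  have hv' : Commute (↑v⁻¹ : S) e := hv.units_inv_left
  refine ⟨⟨_, he.toCorner ↑v⁻¹, Subtype.ext ?_, Subtype.ext ?_⟩, rfl⟩
  · show e * v * e * (e * ↑v⁻¹ * e) = e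
    linear_combination (norm := noncomm_ring) e * v * he.eq * ↑v⁻¹ * e + e * hv.eq * ↑v⁻¹ * e +
      e * e * v.mul_inv * e + he.eq * e + he.eq
  · show e * ↑v⁻¹ * e * (e * v * e) = e
    linear_combination (norm := noncomm_ring) e * ↑v⁻¹ * he.eq * v * e + e * hv'.eq * v * e +
      e * e * v.inv_mul * e + he.eq * e + he.eq

def unitsOfCorner (d : he.Cornerˣ) : Sˣ where
  val := (d : he.Corner).1 + (1 - e)
  inv := (↑d⁻¹ : he.Corner).1 + (1 - e)
  val_inv := by
    obtain ⟨-, hd⟩ := (Subsemigroup.mem_corner_iff he).1 (d : he.Corner).2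
    obtain ⟨hd', -⟩ := (Subsemigroup.mem_corner_iff he).1 (↑d⁻¹ : he.Corner).2
    have hdd : (d : he.Corner).1 * (↑d⁻¹ : he.Corner).1 = e := congrArg Subtype.val d.mul_inv
    linear_combination (norm := noncomm_ring) hdd - hd - hd' + he.eq
  inv_val := by
    obtain ⟨-, hd⟩ := (Subsemigroup.mem_corner_iff he).1 (↑d⁻¹ : he.Corner).2
    obtain ⟨hd', -⟩ := (Subsemigroup.mem_corner_iff he).1 (d : he.Corner).2
    have hdd : (↑d⁻¹ : he.Corner).1 * (d : he.Corner).1 = e := congrArg Subtype.val d.inv_mul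
    linear_combination (norm := noncomm_ring) hdd - hd - hd' + he.eq

end IsIdempotentElem

end Ring

section RingHom

variable {S T : Type*} [Ring S] [Ring T]

namespace IsIdempotentElem

variable {e : S} (he : IsIdempotentElem e)

def cornerMap (f : S →+* T) : he.Corner →+* (he.map f).Corner where
  toFun x := ⟨f x.1, by obtain ⟨z, hz⟩ := x.2; exact ⟨f z, by rw [← hz, map_mul, map_mul]⟩⟩
  map_one' := rfl
  map_mul' x y := Subtype.ext (map_mul f x.1 y.1)
  map_zero' := Subtype.ext (map_zero f)
  map_add' x y := Subtype.ext (map_add f x.1 y.1)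

theorem cornerMap_surjective {f : S →+* T} (hf : Function.Surjective f) :
    Function.Surjective (he.cornerMap f) := by
  rintro ⟨_, z, rfl⟩
  obtain ⟨w, rfl⟩ := hf z
  exact ⟨he.toCorner w, Subtype.ext (by show f (e * w * e) = _; rw [map_mul, map_mul])⟩

end IsIdempotentElem

namespace IsUnitRegularRing

theorem isConj_mul_mul (h : IsUnitRegularRing S) {x y : S} (hxyx : x * y * x = x) :
    IsConj (x * y) (y * x) := by
  obtain ⟨u, hu⟩ := h x
  -- `x y`, `x u` span the same right ideal and `u x`, `y x` the same left ideal
  have h₁ : IsConj (x * y) (x * u) :=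
    isConj_of_mul_eq_right (by rw [← mul_assoc, hxyx]) (by rw [← mul_assoc, hu])
  have h₂ : IsConj (x * u) (u * x) := ⟨u, by simp only [SemiconjBy, mul_assoc]⟩
  have h₃ : IsConj (u * x) (y * x) :=
    isConj_of_mul_eq_left (by linear_combination (norm := noncomm_ring) ↑u * hxyx)
      (by linear_combination (norm := noncomm_ring) y * hu)
  exact h₁.trans (h₂.trans h₃)

theorem isConj_sub_mul_mul (h : IsUnitRegularRing S) {e a b : S} (he : IsIdempotentElem e)
    (ha : a ∈ Subsemigroup.corner e) (hb : b ∈ Subsemigroup.corner e) (hab : a * b * a = a) :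
    IsConj (e - a * b) (e - b * a) := by
  obtain ⟨hea, hae⟩ := (Subsemigroup.mem_corner_iff he).1 ha
  obtain ⟨heb, hbe⟩ := (Subsemigroup.mem_corner_iff he).1 hb
  obtain ⟨c, hc⟩ := (h.isConj_mul_mul (x := a + (1 - e)) (y := b + (1 - e)) (by
    linear_combination (norm := noncomm_ring)
      hab - a * hbe - hea + he.eq + (he.eq - hae - heb) * (a + 1 - e))).one_sub
  refine ⟨c, ?_⟩
  unfold SemiconjBy at hc ⊢
  linear_combination (norm := noncomm_ring)
    hc + c * (he.eq - hae - heb) - (he.eq - hbe - hea) * c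

theorem corner (h : IsUnitRegularRing S) {e : S} (he : IsIdempotentElem e) :
    IsUnitRegularRing he.Corner := by
  rintro ⟨a, ha⟩
  obtain ⟨hea, hae⟩ := (Subsemigroup.mem_corner_iff he).1 ha
  obtain ⟨b, hb, hab⟩ : ∃ b ∈ Subsemigroup.corner e, a * b * a = a := by
    obtain ⟨u, hu⟩ := h a
    exact ⟨e * u * e, ⟨u, rfl⟩,
      by linear_combination (norm := noncomm_ring) a * u * hea + hae * (u * e * a) + hu⟩
  obtain ⟨-, hbe⟩ := (Subsemigroup.mem_corner_iff he).1 hb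
  let x : he.Corner := ⟨a, ha⟩
  let y : he.Corner := ⟨b, hb⟩
  have hp : IsIdempotentElem (e - a * b) := by
    unfold IsIdempotentElem
    linear_combination (norm := noncomm_ring) he.eq - hea * b - a * hbe + hab * b
  obtain ⟨c, hc⟩ := h.isConj_sub_mul_mul he ha hb hab
  obtain ⟨hst, hts⟩ := hc.units_mul_inv_mul hp
  let s : he.Corner := ⟨_, Subsemigroup.mul_mul_mem_corner he (1 - x * y).2 (1 - y * x).2 ↑c⁻¹⟩
  let t : he.Corner := ⟨_, Subsemigroup.mul_mul_mem_corner he (1 - y * x).2 (1 - x * y).2 ↑c⟩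
  exact exists_units_mul_mul_eq_of_mul_eq (x := x) (y := y) (s := s) (t := t)
    (Subtype.ext hab) (Subtype.ext hst) (Subtype.ext hts)

theorem exists_units_map_eq (h : IsUnitRegularRing S) {f : S →+* T}
    (hf : Function.Surjective f) (v : Tˣ) : ∃ u : Sˣ, f u = v := by
  obtain ⟨s, hs⟩ := hf ↑v⁻¹
  obtain ⟨u, hu⟩ := h s
  refine ⟨u, ?_⟩
  have hfu : ↑v⁻¹ * f u * ↑v⁻¹ = (↑v⁻¹ : T) := by rw [← hs, ← map_mul, ← map_mul, hu]
  calc f u = v * (↑v⁻¹ * f u * ↑v⁻¹) * v := by simp [mul_assoc]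
    _ = v := by rw [hfu]; simp

theorem exists_units_map_eq_of_mul_eq (h : IsUnitRegularRing S)
    {f : S →+* T} (hf : Function.Surjective f) {e : S} (he : IsIdempotentElem e) (v : Tˣ)
    (hv₁ : f e * v = f e) (hv₂ : v * f e = f e) : ∃ u : Sˣ, f u = v ∧ e * u = e ∧ u * e = e := by
  have hg := he.one_sub
  have hfg : f (1 - e) = 1 - f e := by rw [map_sub, map_one]
  have hv : Commute (v : T) (f (1 - e)) := by
    rw [hfg]; unfold Commute SemiconjBy
    linear_combination (norm := noncomm_ring) hv₁ - hv₂
  obtain ⟨d, hd⟩ := (hg.map f).isUnit_toCorner_of_commute hv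
  obtain ⟨D, hD⟩ := (h.corner hg).exists_units_map_eq (hg.cornerMap_surjective hf) d
  have hfD : f (D : hg.Corner).1 = f (1 - e) * v * f (1 - e) :=
    congrArg Subtype.val (hD.trans hd)
  obtain ⟨heD, hDe⟩ := (Subsemigroup.mem_corner_iff hg).1 (D : hg.Corner).2
  refine ⟨hg.unitsOfCorner D, ?_, ?_, ?_⟩ <;>
    simp only [IsIdempotentElem.unitsOfCorner, sub_sub_cancel]
  · rw [map_add, hfD, hfg]
    linear_combination (norm := noncomm_ring) hv₁ * f e - hv₁ - hv₂ + (he.map f).eq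
  · linear_combination (norm := noncomm_ring) -(e * heD) - he.eq * (D : hg.Corner).1 + he.eq
  · linear_combination (norm := noncomm_ring) -(hDe * e) - (D : hg.Corner).1 * he.eq + he.eq

theorem exists_units_map_eq_of_mul_mul_eq (h : IsUnitRegularRing S)
    {f : S →+* T} (hf : Function.Surjective f) {e : S} (he : IsIdempotentElem e) (P : Tˣ)
    (hP : f e * P * f e = f e) : ∃ Q : Sˣ, f Q = P ∧ e * Q * e = e := by
  obtain ⟨x, hx⟩ := hf P
  have hA := he.one_sub_mul_mul_mul_self_eq_zero x
  have hB := he.mul_mul_one_sub_mul_self_eq_zero x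
  have hfA : f ((1 - e) * x * e) = (1 - f e) * P * f e := by simp [hx]
  have hfB : f (e * x * (1 - e)) = f e * P * (1 - f e) := by simp [hx]
  have hα : (1 - f e) * P * f e * ((1 - f e) * P * f e) = 0 := by
    rw [← hfA, ← map_mul, hA, map_zero]
  have hβ : f e * P * (1 - f e) * (f e * P * (1 - f e)) = 0 := by
    rw [← hfB, ← map_mul, hB, map_zero]
  have isUnit_one_add {y : S} (hy : y * y = 0) : IsUnit (1 + y) :=
    IsNilpotent.isUnit_one_add ⟨2, by rw [sq, hy]⟩
  have isUnit_one_sub {y : T} (hy : y * y = 0) : IsUnit (1 - y) :=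
    IsNilpotent.isUnit_one_sub ⟨2, by rw [sq, hy]⟩
  obtain ⟨hEZ, hZE⟩ := (he.map f).mul_one_sub_mul_mul_one_sub hP
  obtain ⟨Z, hZ, heZ, hZe⟩ := h.exists_units_map_eq_of_mul_eq hf he
    (((isUnit_one_sub hα).mul P.isUnit).mul (isUnit_one_sub hβ)).unit hEZ hZE
  refine ⟨(((isUnit_one_add hA).mul Z.isUnit).mul (isUnit_one_add hB)).unit, ?_, ?_⟩
  · rw [IsUnit.unit_spec, map_mul, map_mul, map_add, map_add, map_one, hfA, hfB, hZ,
      IsUnit.unit_spec]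
    linear_combination (norm := noncomm_ring)
      -(hα * P * (1 - f e * P * (1 - f e) * (f e * P * (1 - f e)))) - P * hβ
  · rw [IsUnit.unit_spec]
    linear_combination (norm := noncomm_ring) heZ * e + he.eq -
      he.eq * x * e * Z * (1 + e * x * (1 - e)) * e - e * Z * e * x * he.eq

theorem exists_units_map_eq_and_mul_mul_eq (h : IsUnitRegularRing S)
    {f : S →+* T} (hf : Function.Surjective f) (a : S) (v : Tˣ) (hv : f a * v * f a = f a) :
    ∃ u : Sˣ, f u = v ∧ a * u * a = a := by
  obtain ⟨w, hw⟩ := h a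
  have he : IsIdempotentElem (a * w) := by
    unfold IsIdempotentElem; rw [← mul_assoc, hw]
  obtain ⟨Q, hQ, heQ⟩ := h.exists_units_map_eq_of_mul_mul_eq hf he ((Units.map f w)⁻¹ * v) (by
    have hfw : f w * f ↑w⁻¹ = 1 := by rw [← map_mul, Units.mul_inv, map_one]
    simp only [Units.val_mul, Units.coe_map_inv, MonoidHom.coe_coe, map_mul]
    linear_combination (norm := noncomm_ring) f a * hfw * v * f a * f w + hv * f w)
  refine ⟨w * Q, ?_, ?_⟩
  · rw [Units.val_mul, map_mul, hQ]
    simp [← mul_assoc, ← map_mul]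
  · rw [Units.val_mul]
    linear_combination (norm := noncomm_ring) -(a * w * Q * hw) + heQ * a + hw

end IsUnitRegularRing

end RingHom

theorem exists_seq_of_forall_exists_succ {X : ℕ → Type*} {P : ∀ i, X i → Prop}
    {r : ∀ i, X (i + 1) → X i → Prop} (h₀ : ∃ x, P 0 x)
    (h : ∀ i x, P i x → ∃ y, r i y x ∧ P (i + 1) y) :
    ∃ x : ∀ i, X i, ∀ i, P i (x i) ∧ r i (x (i + 1)) (x i) := by
  choose y hyr hyP using h
  let x : ∀ i, {x // P i x} := fun i =>
    Nat.rec ⟨h₀.choose, h₀.choose_spec⟩ (fun i x => ⟨y i x.1 x.2, hyP i x.1 x.2⟩) i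
  exact ⟨fun i => (x i).1, fun i => ⟨(x i).2, hyr i _ (x i).2⟩⟩

theorem ringInverseLimit.exists_units_val_eq {R : ℕ → Type*} [∀ i, Ring (R i)]
    {f : ∀ i, R (i + 1) →+* R i} (u : ∀ i, (R i)ˣ) (hu : ∀ i, f i (u (i + 1)) = u i) :
    ∃ U : (ringInverseLimit R f)ˣ, ∀ i, (U : ∀ i, R i) i = u i := by
  have hu' : ∀ i, f i ↑(u (i + 1))⁻¹ = ↑(u i)⁻¹ := fun i =>
    Units.eq_inv_of_mul_eq_one_left (by rw [← hu i, ← map_mul, Units.mul_inv, map_one])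
  exact ⟨⟨⟨fun i => u i, hu⟩, ⟨fun i => ↑(u i)⁻¹, hu'⟩,
    Subtype.ext (funext fun i => (u i).mul_inv), Subtype.ext (funext fun i => (u i).inv_mul)⟩,
    fun i => rfl⟩

/-- An inverse limit of unit-regular rings along surjective connecting
homomorphisms is unit-regular. -/
theorem stmt_6 (R : ℕ → Type*) [∀ i, Ring (R i)] (f : ∀ i, R (i + 1) →+* R i)
    (hsurj : ∀ i, Function.Surjective (f i))
    (hureg : ∀ i, ∀ a : R i, ∃ u : (R i)ˣ, a * u * a = a) :
    ∀ a : ringInverseLimit R f, ∃ u : (ringInverseLimit R f)ˣ, a * u * a = a := by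
  intro a
  obtain ⟨u, hu⟩ := exists_seq_of_forall_exists_succ
    (P := fun i (v : (R i)ˣ) => a.1 i * v * a.1 i = a.1 i) (r := fun i w v => f i w = v)
    (hureg 0 _) fun i v hv => IsUnitRegularRing.exists_units_map_eq_and_mul_mul_eq (hureg (i + 1))
      (hsurj i) _ v (by rw [a.2 i]; exact hv)
  obtain ⟨U, hU⟩ := ringInverseLimit.exists_units_val_eq u fun i => (hu i).2
  exact ⟨U, Subtype.ext <| funext fun i => by simp [hU, (hu i).1]⟩
end

section
/- Let R be a ring, I an ideal, and e, f idempotents in R with eR ≅ fR as right R-modules, witnessed by a ∈ eRf, b ∈ fRe with ab = e and ba = f. If every unit of the corner ring ē R̄ ē lifts to a unit of eRe, then every right-module isomorphism ē R̄ → f̄ R̄ lifts to a right-module isomorphism eR → fR. Concretely: for every x ∈ f̄ R̄ ē and y ∈ ē R̄ f̄ with xy = f̄ and yx = ē, there exist u ∈ eRf and v ∈ fRe with uv = e, vu = f, and v̄ = x. -/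
/-!
Composing the isomorphism `ē R̄ ≅ f̄ R̄` given by `(y, x)` with the image of `fR ≅ eR`, given by
`(b, a)`, yields a unit `ā x` of `ē R̄ ē` with inverse `y b̄`. Lift it to a unit `v₀` of `eRe` with
inverse `v₀'` and compose back with `(a, b)`: the pair `u = v₀' a`, `v = b v₀` witnesses
`eR ≅ fR`, and `v̄ = b̄ ā x = f̄ x = x`.
-/

/-- For idempotents `e, f` of a ring `R`, left multiplication by `v` is then an isomorphism
`eR ≅ fR` of right modules; for `e = f`, `u` and `v` are inverse units of the corner `eRe`. -/
structure IsCornerIso {M : Type*} [Mul M] (e f u v : M) : Prop where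
  fst_mem : e * u * f = u
  snd_mem : f * v * e = v
  fst_mul_snd : u * v = e
  snd_mul_fst : v * u = f

namespace IsIdempotentElem

variable {M : Type*} [Semigroup M] {e f a : M}

theorem left_absorb_of_mul_mul_eq (he : IsIdempotentElem e) (h : e * a * f = a) : e * a = a := by
  rw [← h, ← mul_assoc, ← mul_assoc, he.eq]

theorem right_absorb_of_mul_mul_eq (hf : IsIdempotentElem f) (h : e * a * f = a) :
    a * f = a := by
  rw [← h, mul_assoc, hf.eq]

end IsIdempotentElem

namespace IsCornerIso

section Mul

variable {M : Type*} [Mul M] {e f u v : M}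

theorem symm (h : IsCornerIso e f u v) : IsCornerIso f e v u :=
  ⟨h.snd_mem, h.fst_mem, h.snd_mul_fst, h.fst_mul_snd⟩

theorem map {N F : Type*} [Mul N] [FunLike F M N] [MulHomClass F M N] (φ : F)
    (h : IsCornerIso e f u v) : IsCornerIso (φ e) (φ f) (φ u) (φ v) := by
  obtain ⟨h₁, h₂, h₃, h₄⟩ := h
  exact ⟨by rw [← map_mul, ← map_mul, h₁], by rw [← map_mul, ← map_mul, h₂],
    by rw [← map_mul, h₃], by rw [← map_mul, h₄]⟩

end Mul

variable {M : Type*} [Semigroup M] {e f g u v u' v' : M}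

theorem trans (he : IsIdempotentElem e) (hf : IsIdempotentElem f) (hg : IsIdempotentElem g)
    (h : IsCornerIso e f u v) (h' : IsCornerIso f g u' v') :
    IsCornerIso e g (u * u') (v' * v) where
  fst_mem := by
    rw [← mul_assoc, he.left_absorb_of_mul_mul_eq h.fst_mem, mul_assoc,
      hg.right_absorb_of_mul_mul_eq h'.fst_mem]
  snd_mem := by
    rw [← mul_assoc, hg.left_absorb_of_mul_mul_eq h'.snd_mem, mul_assoc,
      he.right_absorb_of_mul_mul_eq h.snd_mem]
  fst_mul_snd := by
    rw [mul_assoc, ← mul_assoc u', h'.fst_mul_snd, ← mul_assoc,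
      hf.right_absorb_of_mul_mul_eq h.fst_mem, h.fst_mul_snd]
  snd_mul_fst := by
    rw [mul_assoc, ← mul_assoc v, h.snd_mul_fst, ← mul_assoc,
      hf.right_absorb_of_mul_mul_eq h'.snd_mem, h'.snd_mul_fst]

theorem left_mul_snd (hf : IsIdempotentElem f) (h : IsCornerIso e f u v) : f * v = v :=
  hf.left_absorb_of_mul_mul_eq h.snd_mem

end IsCornerIso

theorem stmt_12_general {R S : Type*} [Ring R] [Ring S] (π : R →+* S)
    (e f : R) (he : IsIdempotentElem e) (hf : IsIdempotentElem f)
    (a b : R) (ha : e * a * f = a) (hb : f * b * e = b)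
    (hab : a * b = e) (hba : b * a = f)
    (hcorner : ∀ w : S, π e * w * π e = w →
      (∃ w' : S, π e * w' * π e = w' ∧ w * w' = π e ∧ w' * w = π e) →
      ∃ v : R, e * v * e = v ∧ (∃ v' : R, e * v' * e = v' ∧ v * v' = e ∧ v' * v = e) ∧
        π v = w) :
    ∀ x y : S, π f * x * π e = x → π e * y * π f = y → x * y = π f → y * x = π e →
      ∃ u v : R, e * u * f = u ∧ f * v * e = v ∧ u * v = e ∧ v * u = f ∧ π v = x := by
  intro x y hx hy hxy hyx
  have hiso : IsCornerIso e f a b := ⟨ha, hb, hab, hba⟩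
  have hiso_bar : IsCornerIso (π e) (π f) y x := ⟨hy, hx, hyx, hxy⟩
  have hunit : IsCornerIso (π e) (π e) (π a * x) (y * π b) :=
    (hiso_bar.trans (he.map π) (hf.map π) (he.map π) (hiso.map π).symm).symm
  obtain ⟨v₀, hv₀, ⟨v₀', hv₀', hv₀v₀', hv₀'v₀⟩, hπv₀⟩ :=
    hcorner _ hunit.fst_mem ⟨_, hunit.snd_mem, hunit.fst_mul_snd, hunit.snd_mul_fst⟩
  have hlift : IsCornerIso e f (v₀' * a) (b * v₀) :=
    (IsCornerIso.mk hv₀' hv₀ hv₀'v₀ hv₀v₀').trans he he hf hiso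
  refine ⟨_, _, hlift.fst_mem, hlift.snd_mem, hlift.fst_mul_snd, hlift.snd_mul_fst, ?_⟩
  rw [map_mul, hπv₀, ← mul_assoc, ← map_mul, hba, hiso_bar.left_mul_snd (hf.map π)]

/-- Let `π : R → S` be a surjective ring homomorphism (the quotient map
`R → R/I`), and `e, f` idempotents of `R` with `eR ≅ fR`, witnessed by `a ∈ eRf`,
`b ∈ fRe` with `ab = e`, `ba = f`. If every unit of the corner `(π e) S (π e)` lifts to a
unit of `eRe`, then every right-module isomorphism `(π e)S → (π f)S` lifts to an
isomorphism `eR → fR`. -/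
theorem stmt_12 {R S : Type*} [Ring R] [Ring S] (π : R →+* S)
    (hsurj : Function.Surjective π)
    (e f : R) (he : IsIdempotentElem e) (hf : IsIdempotentElem f)
    (a b : R) (ha : e * a * f = a) (hb : f * b * e = b)
    (hab : a * b = e) (hba : b * a = f)
    (hcorner : ∀ w : S, π e * w * π e = w →
      (∃ w' : S, π e * w' * π e = w' ∧ w * w' = π e ∧ w' * w = π e) →
      ∃ v : R, e * v * e = v ∧ (∃ v' : R, e * v' * e = v' ∧ v * v' = e ∧ v' * v = e) ∧
        π v = w) :
    ∀ x y : S, π f * x * π e = x → π e * y * π f = y → x * y = π f → y * x = π e →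
      ∃ u v : R, e * u * f = u ∧ f * v * e = v ∧ u * v = e ∧ v * u = f ∧ π v = x :=
  stmt_12_general π e f he hf a b ha hb hab hba hcorner
end

section
/- Let R be a ring, I an ideal, and e, f idempotents with eR ≅ fR. If every isomorphism ē R̄ → f̄ R̄ lifts to an isomorphism eR → fR (i.e., for all x ∈ f̄ R̄ ē, y ∈ ē R̄ f̄ with xy = f̄, yx = ē there exist u ∈ eRf, v ∈ fRe with uv = e, vu = f, v̄ = x), then every unit of ē R̄ ē lifts to a unit of eRe. -/
/-!
Write `x ↦ x̄` for `π`. A unit `w` of `ēSē` with inverse `w'` composes with the isomorphism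
`ēS ≅ f̄S` given by `(ā, b̄)` to the isomorphism `(w' ā, b̄ w)` between `f̄S` and `ēS`. Its lift
`(u, v)`, composed back with `(a, b)`, is a unit `a v` of `eRe` with inverse `u b`, and
`π (a v) = ā b̄ w = ē w = w`.
-/

/-- `a ∈ eRf` and `b ∈ fRe` are mutually inverse, i.e. they witness `eR ≅ fR`; for `e = f` this
says that `a` is a unit of the corner `eRe` with inverse `b`. -/
structure IsCornerIso_s13 {R : Type*} [Mul R] (e f a b : R) : Prop where
  corner_fst : e * a * f = a
  corner_snd : f * b * e = b
  mul_fst_snd : a * b = e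
  mul_snd_fst : b * a = f

theorem IsCornerIso_s13.map {R S F : Type*} [Mul R] [Mul S] [FunLike F R S] [MulHomClass F R S]
    (φ : F) {e f a b : R} (h : IsCornerIso_s13 e f a b) :
    IsCornerIso_s13 (φ e) (φ f) (φ a) (φ b) :=
  ⟨by rw [← map_mul, ← map_mul, h.corner_fst], by rw [← map_mul, ← map_mul, h.corner_snd],
    by rw [← map_mul, h.mul_fst_snd], by rw [← map_mul, h.mul_snd_fst]⟩

section Semigroup

variable {R : Type*} [Semigroup R] {e f g a b c d : R}

theorem IsIdempotentElem.mul_eq_of_mul_mul_eq (he : IsIdempotentElem e) (h : e * a * f = a) :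
    e * a = a := by
  rw [← h, ← mul_assoc, ← mul_assoc, he.eq]

theorem IsIdempotentElem.mul_eq_of_mul_mul_eq' (hf : IsIdempotentElem f) (h : e * a * f = a) :
    a * f = a := by
  rw [← h, mul_assoc, hf.eq]

namespace IsCornerIso_s13

theorem symm_s13 (h : IsCornerIso_s13 e f a b) : IsCornerIso_s13 f e b a :=
  ⟨h.corner_snd, h.corner_fst, h.mul_snd_fst, h.mul_fst_snd⟩

theorem trans_s13 (hf : IsIdempotentElem f) (h₁ : IsCornerIso_s13 e f a b) (h₂ : IsCornerIso_s13 f g c d) :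
    IsCornerIso_s13 e g (a * c) (d * b) := by
  have hdf : d * f = d := hf.mul_eq_of_mul_mul_eq' h₂.corner_snd
  have haf : a * f = a := hf.mul_eq_of_mul_mul_eq' h₁.corner_fst
  have hea : e * a = a * f := by rw [← h₁.mul_fst_snd, mul_assoc, h₁.mul_snd_fst]
  have hbe : b * e = f * b := by rw [← h₁.mul_snd_fst, mul_assoc, h₁.mul_fst_snd]
  refine ⟨?_, ?_, ?_, ?_⟩
  · rw [← mul_assoc, hea, mul_assoc a, mul_assoc a, h₂.corner_fst]
  · rw [mul_assoc, mul_assoc, hbe, ← mul_assoc d, ← mul_assoc g, ← mul_assoc g, h₂.corner_snd]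
  · rw [mul_assoc, ← mul_assoc c, h₂.mul_fst_snd, ← mul_assoc, haf, h₁.mul_fst_snd]
  · rw [mul_assoc, ← mul_assoc b, h₁.mul_snd_fst, ← mul_assoc, hdf, h₂.mul_snd_fst]

end IsCornerIso_s13

end Semigroup

theorem stmt_13_general {R S : Type*} [Ring R] [Ring S] (π : R →+* S)
    (e f : R) (he : IsIdempotentElem e) (hf : IsIdempotentElem f)
    (a b : R) (ha : e * a * f = a) (hb : f * b * e = b)
    (hab : a * b = e) (hba : b * a = f)
    (hlift : ∀ x y : S, π f * x * π e = x → π e * y * π f = y → x * y = π f →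
      y * x = π e →
      ∃ u v : R, e * u * f = u ∧ f * v * e = v ∧ u * v = e ∧ v * u = f ∧ π v = x) :
    ∀ w : S, π e * w * π e = w →
      (∃ w' : S, π e * w' * π e = w' ∧ w * w' = π e ∧ w' * w = π e) →
      ∃ v : R, e * v * e = v ∧ (∃ v' : R, e * v' * e = v' ∧ v * v' = e ∧ v' * v = e) ∧
        π v = w := by
  rintro w hw ⟨w', hw', hww', hw'w⟩
  have hab' : IsCornerIso_s13 e f a b := ⟨ha, hb, hab, hba⟩
  have hπe : IsIdempotentElem (π e) := he.map π
  have hx : IsCornerIso_s13 (π f) (π e) (π b * w) (w' * π a) :=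
    (hab'.map π).symm_s13.trans_s13 hπe ⟨hw, hw', hww', hw'w⟩
  obtain ⟨u, v, hu, hv, huv, hvu, hπv⟩ :=
    hlift _ _ hx.corner_fst hx.corner_snd hx.mul_fst_snd hx.mul_snd_fst
  have hav : IsCornerIso_s13 e e (a * v) (u * b) := hab'.trans_s13 hf ⟨hv, hu, hvu, huv⟩
  refine ⟨a * v, hav.corner_fst, ⟨u * b, hav.corner_snd, hav.mul_fst_snd, hav.mul_snd_fst⟩, ?_⟩
  rw [map_mul, hπv, ← mul_assoc, ← map_mul, hab, hπe.mul_eq_of_mul_mul_eq hw]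

/-- Let `π : R → S` be a surjective ring homomorphism (the quotient map
`R → R/I`), and `e, f` idempotents of `R` with `eR ≅ fR`. If every right-module
isomorphism `(π e)S → (π f)S` lifts to an isomorphism `eR → fR`, then every unit of the
corner `(π e) S (π e)` lifts to a unit of `eRe`. -/
theorem stmt_13 {R S : Type*} [Ring R] [Ring S] (π : R →+* S)
    (hsurj : Function.Surjective π)
    (e f : R) (he : IsIdempotentElem e) (hf : IsIdempotentElem f)
    (a b : R) (ha : e * a * f = a) (hb : f * b * e = b)
    (hab : a * b = e) (hba : b * a = f)
    (hlift : ∀ x y : S, π f * x * π e = x → π e * y * π f = y → x * y = π f →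
      y * x = π e →
      ∃ u v : R, e * u * f = u ∧ f * v * e = v ∧ u * v = e ∧ v * u = f ∧ π v = x) :
    ∀ w : S, π e * w * π e = w →
      (∃ w' : S, π e * w' * π e = w' ∧ w * w' = π e ∧ w' * w = π e) →
      ∃ v : R, e * v * e = v ∧ (∃ v' : R, e * v' * e = v' ∧ v * v' = e ∧ v' * v = e) ∧
        π v = w :=
  stmt_13_general π e f he hf a b ha hb hab hba hlift
end

section
/- Let (M_i, u_i, φ_i)_{i∈ℕ} be a family of commutative monoids (written additively) with distinguished elements u_i, where each φ_i : M_{i+1} → M_i is a monoid homomorphism with φ_i(u_{i+1}) = u_i and each u_i is an order-unit in M_i. Let I = {(a_i) ∈ ∏ M_i : φ_i(a_{i+1}) = a_i} and u = (u_i) ∈ I, and let N = {a ∈ I : a ≤ n·u in ∏ M_i for some n ∈ ℕ}, a submonoid of I. Then u is an order-unit in N, in the sense that for every a ∈ N there exist c ∈ N and m ∈ ℕ with a + c = 2m·u. -/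
/-- For an inverse system of commutative monoids with distinguished
order-units `(Mᵢ, uᵢ, φᵢ)`, the element `u = (uᵢ)` is an order-unit in the submonoid
`N = {a ∈ lim← Mᵢ : a ≤ n·u in ∏ Mᵢ for some n}`: for every `a ∈ N` there are `c ∈ N`
and `m ∈ ℕ` with `a + c = 2m·u`. -/
theorem stmt_14 (M : ℕ → Type*) [∀ i, AddCommMonoid (M i)]
    (u : ∀ i, M i) (φ : ∀ i, M (i + 1) →+ M i)
    (hu : ∀ i, φ i (u (i + 1)) = u i)
    (horder : ∀ i, ∀ a : M i, ∃ n : ℕ, ∃ b : M i, a + b = n • u i) :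
    ∀ a : ∀ i, M i, (∀ i, φ i (a (i + 1)) = a i) →
      (∃ (n : ℕ) (b : ∀ i, M i), a + b = n • u) →
      ∃ (c : ∀ i, M i) (m : ℕ),
        (∀ i, φ i (c (i + 1)) = c i) ∧
        (∃ (n : ℕ) (b : ∀ i, M i), c + b = n • u) ∧
        a + c = (2 * m) • u := by
  rintro a ha ⟨n, b, hab⟩
  -- componentwise: a i + b i = n • u i
  have hab' : ∀ i, a i + b i = n • u i := fun i => congrFun hab i
  -- key: φ i (b (i+1)) is also a complement of a i
  have key : ∀ i, a i + φ i (b (i + 1)) = n • u i := by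
    intro i
    have h := congrArg (φ i) (hab' (i + 1))
    simpa [map_add, map_nsmul, ha, hu] using h
  refine ⟨fun i => φ i (b (i + 1)) + φ i (b (i + 1)) + a i, n, ?_, ⟨2 * n, a, ?_⟩, ?_⟩
  · intro i
    set y := φ i (b (i + 1)) with hy
    set z := φ i (φ (i + 1) (b (i + 2))) with hz
    have e1 : a i + y = n • u i := key i
    have e2 : a i + z = n • u i := by
      have h := congrArg (φ i) (key (i + 1))
      simpa [map_add, map_nsmul, ha, hu, hz] using h
    show φ i (φ (i + 1) (b (i + 1 + 1)) + φ (i + 1) (b (i + 1 + 1)) + a (i + 1)) =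
      y + y + a i
    rw [map_add, map_add, ha]
    calc z + z + a i = (a i + z) + z := by abel
      _ = n • u i + z := by rw [e2]
      _ = (a i + y) + z := by rw [e1]
      _ = (a i + z) + y := by abel
      _ = n • u i + y := by rw [e2]
      _ = (a i + y) + y := by rw [e1]
      _ = y + y + a i := by abel
  · funext i
    show (φ i (b (i + 1)) + φ i (b (i + 1)) + a i) + a i = (2 * n) • u i
    have e1 := key i
    calc (φ i (b (i + 1)) + φ i (b (i + 1)) + a i) + a i
        = (a i + φ i (b (i + 1))) + (a i + φ i (b (i + 1))) := by abel
      _ = n • u i + n • u i := by rw [e1]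
      _ = (2 * n) • u i := by rw [two_mul, add_nsmul]
  · funext i
    show a i + (φ i (b (i + 1)) + φ i (b (i + 1)) + a i) = (2 * n) • u i
    have e1 := key i
    calc a i + (φ i (b (i + 1)) + φ i (b (i + 1)) + a i)
        = (a i + φ i (b (i + 1))) + (a i + φ i (b (i + 1))) := by abel
      _ = n • u i + n • u i := by rw [e1]
      _ = (2 * n) • u i := by rw [two_mul, add_nsmul]
end
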